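/- Let B be a finite nonempty set of measurable predictors β : 𝒳 → 𝒴, let r : 𝒴 × 𝒴 → [0, C] be a measurable loss bounded by C > 0, and let (x_1, y_1), …, (x_n, y_n) be i.i.d. random pairs in 𝒳 × 𝒴. Define the population risk R(β) := E[r(β(x_1), y_1)] and the empirical risk R̂_n(β) := (1/n) Σ_{i=1}^n r(β(x_i), y_i). Fix a probability vector z on B, λ > 0, and let θ̂_λ be the minimizer over probability vectors θ on B of θ ↦ Σ_β θ(β) R̂_n(β) + λ D_KL(θ, z). Then for every δ > 0, with probability at least 1 − e^{−δ}, simultaneously for all probability vectors θ on B: Σ_β θ̂_λ(β) R(β) − Σ_β θ(β) R(β) ≤ C²(log(2|B|) + δ)/(2nλ) + 2λ D_KL(θ, z). In particular, for any b > 0, choosing λ = (C/2)·√( (log(2|B|) + δ)/(n b) ) gives, with probability at least 1 − e^{−δ}: Σ_β θ̂_λ(β) R(β) − inf_{θ : D_KL(θ, z) ≤ b} Σ_β θ(β) R(β) ≤ 2C·√( b(log(2|B|) + δ)/n ). -/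

import Mathlib

/-!
On the event that every empirical risk is within `ε = C √((log (2|B|) + δ) / (2n))` of the
corresponding population risk, which by Hoeffding's inequality and a union bound over the `2|B|`
one-sided deviations has probability at least `1 - e^{-δ}`, the bound is deterministic. The
Donsker–Varadhan inequality `⟪θ, X⟫ ≤ λ KL(θ, z) + λ log E_z e^{X/λ}`, combined with Hoeffding's
lemma `λ log E_z e^{X/λ} ≤ E_z X + ε² / (2λ)` for `X ∈ [-ε, ε]`, is applied to `X = R - R̂ₙ`
under `θ̂` and to `X = R̂ₙ - R` under `θ`; adding the two and using the minimality of `θ̂` for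
`⟪·, R̂ₙ⟫ + λ KL(·, z)` gives `⟪θ̂ - θ, R⟫ ≤ ε² / λ + 2λ KL(θ, z)`. The second bound is the
first one at the value of `λ` that balances its two terms when `KL(θ, z) ≤ b`.
-/

open Finset MeasureTheory ProbabilityTheory

/-- Kullback–Leibler divergence `Σ_β p(β) log(p(β)/q(β))` between probability vectors on a
finite type (finite-valued formula, with the convention `0 · log 0 = 0`; it agrees with the
usual KL divergence whenever `p` is absolutely continuous with respect to `q`). -/
noncomputable def klFin {B : Type*} [Fintype B] (p q : B → ℝ) : ℝ :=
  ∑ β, p β * Real.log (p β / q β)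

open Real

section

variable {B : Type*} [Fintype B]

theorem klFin_self (q : B → ℝ) : klFin q q = 0 :=
  Finset.sum_eq_zero fun β _ ↦ by by_cases h : q β = 0 <;> simp [h]

theorem mul_sub_mul_log_div_le {p q x S : ℝ} (hp : 0 ≤ p) (hq : 0 ≤ q) (hpq : q = 0 → p = 0)
    (hS : 0 < S) :
    p * x - p * log (p / q) ≤ p * log S + (q * exp x / S - p) := by
  rcases hp.eq_or_lt with rfl | hp
  · simp only [zero_mul, sub_zero, zero_add]; positivity
  have hq : 0 < q := hq.lt_of_ne (fun h ↦ hp.ne' (hpq h.symm))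
  have hlog := log_le_sub_one_of_pos (show 0 < q * exp x / (p * S) by positivity)
  rw [log_div (by positivity) (by positivity), log_mul hq.ne' (exp_ne_zero x),
    log_mul hp.ne' hS.ne', log_exp] at hlog
  rw [log_div hp.ne' hq.ne']
  calc p * x - p * (log p - log q)
      = p * (log q + x - (log p + log S)) + p * log S := by ring
    _ ≤ p * (q * exp x / (p * S) - 1) + p * log S := by gcongr
    _ = p * log S + (q * exp x / S - p) := by field_simp; ring

theorem exp_sum_mul_sub_klFin_le_sum_mul_exp {p q : B → ℝ} (hp0 : ∀ β, 0 ≤ p β)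
    (hp1 : ∑ β, p β = 1) (hq0 : ∀ β, 0 ≤ q β) (hpq : ∀ β, q β = 0 → p β = 0) (X : B → ℝ) :
    exp (∑ β, p β * X β - klFin p q) ≤ ∑ β, q β * exp (X β) := by
  set S := ∑ β, q β * exp (X β)
  have hS : 0 < S := by
    obtain ⟨β, -, hβ⟩ := Finset.exists_ne_zero_of_sum_ne_zero (hp1.trans_ne one_ne_zero)
    have hqβ : 0 < q β := (hq0 β).lt_of_ne fun h ↦ hβ (hpq β h.symm)
    exact lt_of_lt_of_le (by positivity)
      (Finset.single_le_sum (fun β _ ↦ mul_nonneg (hq0 β) (exp_nonneg (X β))) (mem_univ β))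
  have hsum := Finset.sum_le_sum fun β (_ : β ∈ univ) ↦
    mul_sub_mul_log_div_le (x := X β) (hp0 β) (hq0 β) (hpq β) hS
  simp only [Finset.sum_add_distrib, Finset.sum_sub_distrib, ← Finset.sum_mul,
    ← Finset.sum_div] at hsum
  rw [div_self hS.ne', hp1] at hsum
  rw [← le_log_iff_exp_le hS]
  unfold klFin
  linarith

theorem sum_mul_exp_le_of_mem_Icc {z X : B → ℝ} (hz0 : ∀ β, 0 ≤ z β) (hz1 : ∑ β, z β = 1)
    {a b : ℝ} (hX : ∀ β, X β ∈ Set.Icc a b) (t : ℝ) :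
    ∑ β, z β * exp (t * X β) ≤ exp (t * ∑ β, z β * X β + t ^ 2 * (b - a) ^ 2 / 8) := by
  let _ : MeasurableSpace B := ⊤
  let μ := (PMF.ofFintype (fun β ↦ ENNReal.ofReal (z β)) (by
    rw [← ENNReal.ofReal_sum_of_nonneg fun β _ ↦ hz0 β, hz1, ENNReal.ofReal_one])).toMeasure
  have hint (f : B → ℝ) : ∫ β, f β ∂μ = ∑ β, z β * f β := by
    simp [μ, PMF.integral_eq_sum, ENNReal.toReal_ofReal (hz0 _)]
  have hmgf := (hasSubgaussianMGF_of_mem_Icc (μ := μ) (X := X) Measurable.of_discrete.aemeasurable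
    (ae_of_all _ hX)).mgf_le t
  have hc : (((‖b - a‖₊ / 2) ^ 2 : NNReal) : ℝ) = (b - a) ^ 2 / 4 := by
    norm_num [div_pow]
  simp only [mgf, hint, hc] at hmgf
  calc ∑ β, z β * exp (t * X β)
      = (∑ β, z β * exp (t * (X β - ∑ β, z β * X β))) * exp (t * ∑ β, z β * X β) := by
        rw [Finset.sum_mul]
        refine Finset.sum_congr rfl fun β _ ↦ ?_
        rw [mul_assoc, ← exp_add]; ring_nf
    _ ≤ exp ((b - a) ^ 2 / 4 * t ^ 2 / 2) * exp (t * ∑ β, z β * X β) := by gcongr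
    _ = _ := by rw [← exp_add]; ring_nf

theorem sum_mul_le_klFin_div_add {p z X : B → ℝ} (hp0 : ∀ β, 0 ≤ p β) (hp1 : ∑ β, p β = 1)
    (hz0 : ∀ β, 0 ≤ z β) (hz1 : ∑ β, z β = 1) (hpz : ∀ β, z β = 0 → p β = 0)
    {a b : ℝ} (hX : ∀ β, X β ∈ Set.Icc a b) {t : ℝ} (ht : 0 < t) :
    ∑ β, p β * X β ≤ klFin p z / t + ∑ β, z β * X β + t * (b - a) ^ 2 / 8 := by
  have hdv := exp_sum_mul_sub_klFin_le_sum_mul_exp hp0 hp1 hz0 hpz (fun β ↦ t * X β)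
  have hlin : ∑ β, p β * (t * X β) = t * ∑ β, p β * X β := by
    rw [Finset.mul_sum]; exact Finset.sum_congr rfl fun β _ ↦ by ring
  have h := exp_le_exp.mp (hdv.trans (sum_mul_exp_le_of_mem_Icc hz0 hz1 hX t))
  rw [hlin] at h
  calc ∑ β, p β * X β = (t * ∑ β, p β * X β) / t := by field_simp
    _ ≤ (klFin p z + t * ∑ β, z β * X β + t ^ 2 * (b - a) ^ 2 / 8) / t := by gcongr; linarith
    _ = _ := by field_simp

theorem excess_risk_le_of_forall_abs_sub_le {z R Rh θ p : B → ℝ}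
    (hz0 : ∀ β, 0 ≤ z β) (hz1 : ∑ β, z β = 1)
    (hθ0 : ∀ β, 0 ≤ θ β) (hθ1 : ∑ β, θ β = 1) (hθz : ∀ β, z β = 0 → θ β = 0)
    (hp0 : ∀ β, 0 ≤ p β) (hp1 : ∑ β, p β = 1) (hpz : ∀ β, z β = 0 → p β = 0)
    {ε : ℝ} (hR : ∀ β, |Rh β - R β| ≤ ε) {lam : ℝ} (hlam : 0 < lam)
    (hmin : ∑ β, θ β * Rh β + lam * klFin θ z ≤ ∑ β, p β * Rh β + lam * klFin p z) :
    ∑ β, θ β * R β - ∑ β, p β * R β ≤ ε ^ 2 / lam + 2 * lam * klFin p z := by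
  have hθ := sum_mul_le_klFin_div_add hθ0 hθ1 hz0 hz1 hθz (X := fun β ↦ R β - Rh β)
    (a := -ε) (b := ε) (fun β ↦ by constructor <;> linarith [abs_le.mp (hR β)])
    (inv_pos.mpr hlam)
  have hp := sum_mul_le_klFin_div_add hp0 hp1 hz0 hz1 hpz (X := fun β ↦ Rh β - R β)
    (a := -ε) (b := ε) (fun β ↦ by constructor <;> linarith [abs_le.mp (hR β)])
    (inv_pos.mpr hlam)
  have hvar : lam⁻¹ * (ε - -ε) ^ 2 / 8 = ε ^ 2 / lam / 2 := by field_simp; ring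
  simp only [mul_sub, Finset.sum_sub_distrib, div_inv_eq_mul, hvar] at hθ hp
  linarith

theorem sub_iInf_le_of_forall_sub_le_add_klFin {z R : B → ℝ} (hz0 : ∀ β, 0 ≤ z β)
    (hz1 : ∑ β, z β = 1) {A K lam b : ℝ} (hlam : 0 ≤ lam) (hb : 0 ≤ b)
    (h : ∀ θ : B → ℝ, (∀ β, 0 ≤ θ β) → ∑ β, θ β = 1 → (∀ β, z β = 0 → θ β = 0) →
      A - ∑ β, θ β * R β ≤ K + 2 * lam * klFin θ z) :
    A - ⨅ θ : {θ : B → ℝ // (∀ β, 0 ≤ θ β) ∧ ∑ β, θ β = 1 ∧ (∀ β, z β = 0 → θ β = 0) ∧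
      klFin θ z ≤ b}, ∑ β, (θ : B → ℝ) β * R β ≤ K + 2 * lam * b := by
  have : Nonempty {θ : B → ℝ // (∀ β, 0 ≤ θ β) ∧ ∑ β, θ β = 1 ∧
      (∀ β, z β = 0 → θ β = 0) ∧ klFin θ z ≤ b} :=
    ⟨⟨z, hz0, hz1, fun _ h ↦ h, (klFin_self z).trans_le hb⟩⟩
  refine sub_le_comm.mpr (le_ciInf fun ⟨θ, hθ0, hθ1, hθz, hθb⟩ ↦ sub_le_comm.mp ?_)
  exact (h θ hθ0 hθ1 hθz).trans (by gcongr)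

end

section

variable {Ω : Type*} [MeasurableSpace Ω] {μ : Measure Ω} [IsProbabilityMeasure μ] {n : ℕ}
  {Y : Fin n → Ω → ℝ} {a b m : ℝ}

theorem measureReal_avg_sub_ge_le_of_iIndepFun (hn : 0 < n) (hindep : iIndepFun Y μ)
    (hmeas : ∀ i, Measurable (Y i)) (hY : ∀ i ω, Y i ω ∈ Set.Icc a b) (hm : ∀ i, μ[Y i] = m)
    {ε : ℝ} (hε : 0 ≤ ε) :
    μ.real {ω | ε ≤ 1 / (n : ℝ) * ∑ i, Y i ω - m} ≤ exp (-(2 * n * ε ^ 2 / (b - a) ^ 2)) := by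
  have hsubG (i : Fin n) : HasSubgaussianMGF (fun ω ↦ Y i ω - m) ((‖b - a‖₊ / 2) ^ 2) μ :=
    hm i ▸ hasSubgaussianMGF_of_mem_Icc (hmeas i).aemeasurable (ae_of_all _ (hY i))
  have hindep' : iIndepFun (fun i ω ↦ Y i ω - m) μ :=
    hindep.comp (fun _ x ↦ x - m) fun _ ↦ measurable_id.sub_const m
  have h := HasSubgaussianMGF.measure_sum_ge_le_of_iIndepFun hindep' (s := univ)
    (fun i _ ↦ hsubG i) (mul_nonneg n.cast_nonneg hε)
  have hnR : (0 : ℝ) < n := by exact_mod_cast hn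
  calc μ.real {ω | ε ≤ 1 / (n : ℝ) * ∑ i, Y i ω - m}
      = μ.real {ω | n * ε ≤ ∑ i, (Y i ω - m)} := by
        congr 1; ext ω
        have hS (S : ℝ) : 1 / (n : ℝ) * S - m = (S - n * m) / n := by field_simp
        rw [Set.mem_ofPred, Set.mem_ofPred, Finset.sum_sub_distrib, sum_const, card_univ,
          Fintype.card_fin, nsmul_eq_mul, hS, le_div_iff₀ hnR, mul_comm]
    _ ≤ _ := h
    _ = _ := by
      congr 1
      simp only [sum_const, card_univ, Fintype.card_fin, nsmul_eq_mul, NNReal.coe_mul,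
        NNReal.coe_natCast, NNReal.coe_pow, NNReal.coe_div, NNReal.coe_ofNat, coe_nnnorm,
        Real.norm_eq_abs]
      rw [div_pow, sq_abs]
      field_simp

theorem measureReal_abs_avg_sub_ge_le_of_iIndepFun (hn : 0 < n) (hindep : iIndepFun Y μ)
    (hmeas : ∀ i, Measurable (Y i)) (hY : ∀ i ω, Y i ω ∈ Set.Icc a b) (hm : ∀ i, μ[Y i] = m)
    {ε : ℝ} (hε : 0 ≤ ε) :
    μ.real {ω | ε ≤ |1 / (n : ℝ) * ∑ i, Y i ω - m|} ≤
      2 * exp (-(2 * n * ε ^ 2 / (b - a) ^ 2)) := by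
  have hupper := measureReal_avg_sub_ge_le_of_iIndepFun hn hindep hmeas hY hm hε
  have hlower := measureReal_avg_sub_ge_le_of_iIndepFun (Y := fun i ω ↦ -Y i ω) (a := -b)
    (b := -a) (m := -m) hn (hindep.comp (fun _ x ↦ -x) fun _ ↦ measurable_neg)
    (fun i ↦ (hmeas i).neg)
    (fun i ω ↦ ⟨neg_le_neg (hY i ω).2, neg_le_neg (hY i ω).1⟩)
    (fun i ↦ by rw [integral_neg, hm]) hε
  rw [neg_sub_neg] at hlower
  calc μ.real {ω | ε ≤ |1 / (n : ℝ) * ∑ i, Y i ω - m|}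
      ≤ μ.real ({ω | ε ≤ 1 / (n : ℝ) * ∑ i, Y i ω - m} ∪
          {ω | ε ≤ 1 / (n : ℝ) * ∑ i, -Y i ω - -m}) := by
        refine measureReal_mono fun ω hω ↦ ?_
        rw [Set.mem_ofPred, le_abs] at hω
        rw [Set.mem_union, Set.mem_ofPred, Set.mem_ofPred, Finset.sum_neg_distrib]
        rcases hω with h | h
        · exact .inl h
        · exact .inr (by linarith)
    _ ≤ _ := measureReal_union_le _ _
    _ ≤ _ := by linarith

theorem ofReal_one_sub_le_measure_iInter {ι : Type*} [Fintype ι] {s : ι → Set Ω} {ε : ℝ}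
    (h : ∑ i, μ.real (s i)ᶜ ≤ ε) : ENNReal.ofReal (1 - ε) ≤ μ (⋂ i, s i) := by
  have hcompl : μ.real (⋂ i, s i)ᶜ ≤ ε := by
    rw [Set.compl_iInter]
    exact (measureReal_iUnion_fintype_le _).trans h
  have hsplit := measureReal_union_le (μ := μ) (⋂ i, s i) (⋂ i, s i)ᶜ
  rw [Set.union_compl_self, probReal_univ] at hsplit
  exact ENNReal.ofReal_le_of_le_toReal (by rw [← measureReal_def]; linarith)

end

theorem log_two_mul_card_pos {ι : Type*} [Fintype ι] [Nonempty ι] :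
    0 < log (2 * Fintype.card ι) :=
  log_pos (by linarith [(Nat.one_le_cast (α := ℝ)).mpr (Fintype.card_pos (α := ι))])

theorem ofReal_one_sub_exp_le_measure_iInter_abs_avg_sub_lt {𝓩 W ι : Type*} [MeasurableSpace 𝓩]
    [MeasurableSpace W] {P : Measure W} [IsProbabilityMeasure P] [Fintype ι] [Nonempty ι] {n : ℕ}
    (hn : 0 < n) {data : Fin n → W → 𝓩} (hdata_meas : ∀ i, Measurable (data i))
    (hindep : iIndepFun data P)
    (hident : ∀ i, Measure.map (data i) P = Measure.map (data ⟨0, hn⟩) P)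
    {loss : ι → 𝓩 → ℝ} (hloss : ∀ k, Measurable (loss k)) {C : ℝ} (hC : 0 < C)
    (hbdd : ∀ k q, loss k q ∈ Set.Icc 0 C) {δ : ℝ} (hδ : 0 < δ) :
    ENNReal.ofReal (1 - exp (-δ)) ≤ P (⋂ k, {w | |1 / (n : ℝ) * ∑ i, loss k (data i w) -
      ∫ w, loss k (data ⟨0, hn⟩ w) ∂P| < C * √((log (2 * Fintype.card ι) + δ) / (2 * n))}) := by
  set L := log (2 * Fintype.card ι)
  have hLδ : 0 < L + δ := add_pos log_two_mul_card_pos hδ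
  have hnR : (0 : ℝ) < n := by exact_mod_cast hn
  set ε := C * √((L + δ) / (2 * n))
  have hexp : 2 * n * ε ^ 2 / (C - 0) ^ 2 = L + δ := by
    rw [mul_pow, sq_sqrt (by positivity), sub_zero]; field_simp
  refine ofReal_one_sub_le_measure_iInter ?_
  calc _ ≤ ∑ _k : ι, 2 * exp (-(2 * n * ε ^ 2 / (C - 0) ^ 2)) := by
        refine Finset.sum_le_sum fun k _ ↦ ?_
        have hmean (i : Fin n) : P[loss k ∘ data i] = ∫ w, loss k (data ⟨0, hn⟩ w) ∂P :=
          (IdentDistrib.comp ⟨(hdata_meas i).aemeasurable, (hdata_meas _).aemeasurable,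
            hident i⟩ (hloss k)).integral_eq
        simpa only [Set.compl_ofPred, not_lt, Function.comp_apply] using
          measureReal_abs_avg_sub_ge_le_of_iIndepFun hn
            (hindep.comp (fun _ ↦ loss k) fun _ ↦ hloss k)
            (fun i ↦ (hloss k).comp (hdata_meas i)) (fun _ _ ↦ hbdd k _) hmean (by positivity)
    _ = exp (-δ) := by
        rw [hexp, sum_const, card_univ, nsmul_eq_mul, neg_add, exp_add, exp_neg,
          exp_log (by positivity)]
        field_simp

theorem tuned_bound_eq_two_mul_sqrt {C s n b lam : ℝ} (hs : 0 < s) (hn : 0 < n) (hb : 0 < b)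
    (hlam : lam = C / 2 * √(s / (n * b))) :
    C ^ 2 * s / (2 * n * lam) + 2 * lam * b = 2 * C * √(b * s / n) := by
  set u := √(s / (n * b))
  have hu : 0 < u := Real.sqrt_pos.mpr (by positivity)
  have hs_eq : s = u ^ 2 * (n * b) := by rw [Real.sq_sqrt (by positivity)]; field_simp
  have hsqrt : √(b * s / n) = b * u := by
    rw [← Real.sqrt_sq (by positivity : 0 ≤ b * u), hs_eq]; congr 1; field_simp
  rw [hsqrt, hlam, hs_eq]
  field_simp
  ring

/-- **High-probability excess risk bound for the Gibbs randomized predictor with a bounded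
loss.** Let `B` be a finite nonempty set of measurable predictors `pred β : 𝓧 → 𝓨`, let
`r : 𝓨 × 𝓨 → [0, C]` be a measurable bounded loss, and let `data i : W → 𝓧 × 𝓨`,
`i < n`, be i.i.d. samples. With population risk `Rpop β = E[r(β(x₁), y₁)]`, empirical risk
`Rn w β = (1/n) Σ_i r(β(xᵢ), yᵢ)`, prior `z`, `lam > 0`, and `θhat w` the minimizer of
`θ ↦ Σ_β θ(β)·Rn w β + lam·D_KL(θ, z)` over probability vectors on `B`: for every `δ > 0`,
with probability at least `1 − e^{−δ}`, simultaneously for all probability vectors `θ`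
(with `D_KL(θ, z) < ∞`),
`E_{β∼θhat}[Rpop] − E_{β∼θ}[Rpop] ≤ C²(log(2|B|) + δ)/(2 n lam) + 2 lam D_KL(θ, z)`;
and if moreover `lam = (C/2)·√((log(2|B|) + δ)/(n b))` for some `b > 0`, then with
probability at least `1 − e^{−δ}`,
`E_{β∼θhat}[Rpop] − inf_{θ : D_KL(θ,z) ≤ b} E_{β∼θ}[Rpop] ≤ 2C·√(b(log(2|B|) + δ)/n)`. -/
theorem gibbs_randomized_predictor_risk {𝓧 𝓨 : Type*}
    [MeasurableSpace 𝓧] [MeasurableSpace 𝓨]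
    {B : Type*} [Fintype B] [Nonempty B]
    (pred : B → 𝓧 → 𝓨) (hpred : ∀ β, Measurable (pred β))
    (r : 𝓨 → 𝓨 → ℝ) (hr_meas : Measurable (Function.uncurry r))
    (C : ℝ) (hC : 0 < C) (hr_bdd : ∀ y y', r y y' ∈ Set.Icc (0 : ℝ) C)
    {W : Type*} [MeasurableSpace W] (P : Measure W) [IsProbabilityMeasure P]
    {n : ℕ} (hn : 0 < n)
    (data : Fin n → W → 𝓧 × 𝓨) (hdata_meas : ∀ i, Measurable (data i))
    (hindep : iIndepFun data P)
    (hident : ∀ i, Measure.map (data i) P = Measure.map (data ⟨0, hn⟩) P)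
    (Rn : W → B → ℝ)
    (hRn : ∀ w β, Rn w β = (1 / (n : ℝ)) * ∑ i, r (pred β (data i w).1) (data i w).2)
    (Rpop : B → ℝ)
    (hRpop : ∀ β, Rpop β = ∫ w, r (pred β (data ⟨0, hn⟩ w).1) (data ⟨0, hn⟩ w).2 ∂P)
    (z : B → ℝ) (hz_nonneg : ∀ β, 0 ≤ z β) (hz_sum : ∑ β, z β = 1)
    (lam : ℝ) (hlam : 0 < lam)
    (θhat : W → B → ℝ)
    (hθhat_nonneg : ∀ w β, 0 ≤ θhat w β) (hθhat_sum : ∀ w, ∑ β, θhat w β = 1)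
    (hθhat_ac : ∀ w β, z β = 0 → θhat w β = 0)
    (hmin : ∀ w, ∀ p : B → ℝ, (∀ β, 0 ≤ p β) → ∑ β, p β = 1 →
      (∀ β, z β = 0 → p β = 0) →
      (∑ β, θhat w β * Rn w β) + lam * klFin (θhat w) z ≤
        (∑ β, p β * Rn w β) + lam * klFin p z)
    (δ : ℝ) (hδ : 0 < δ) :
    P {w | ∀ θ : B → ℝ, (∀ β, 0 ≤ θ β) → ∑ β, θ β = 1 → (∀ β, z β = 0 → θ β = 0) →
        (∑ β, θhat w β * Rpop β) - (∑ β, θ β * Rpop β) ≤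
          C ^ 2 * (Real.log (2 * Fintype.card B) + δ) / (2 * n * lam)
            + 2 * lam * klFin θ z} ≥
      ENNReal.ofReal (1 - Real.exp (-δ)) ∧
    (∀ b : ℝ, 0 < b →
      lam = C / 2 * Real.sqrt ((Real.log (2 * Fintype.card B) + δ) / (n * b)) →
      P {w | (∑ β, θhat w β * Rpop β) -
          (⨅ θ : {θ : B → ℝ // (∀ β, 0 ≤ θ β) ∧ ∑ β, θ β = 1 ∧
              (∀ β, z β = 0 → θ β = 0) ∧ klFin θ z ≤ b},
            ∑ β, (θ : B → ℝ) β * Rpop β) ≤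
          2 * C * Real.sqrt (b * (Real.log (2 * Fintype.card B) + δ) / n)} ≥
        ENNReal.ofReal (1 - Real.exp (-δ))) := by
  set L := Real.log (2 * Fintype.card B)
  set ε := C * Real.sqrt ((L + δ) / (2 * n))
  have hnR : (0 : ℝ) < n := by exact_mod_cast hn
  have hLδ : 0 < L + δ := add_pos log_two_mul_card_pos hδ
  have hε2 : ε ^ 2 / lam = C ^ 2 * (L + δ) / (2 * n * lam) := by
    rw [mul_pow, Real.sq_sqrt (by positivity)]; field_simp
  have hgood := ofReal_one_sub_exp_le_measure_iInter_abs_avg_sub_lt hn hdata_meas hindep hident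
    (loss := fun β q ↦ r (pred β q.1) q.2)
    (fun β ↦ hr_meas.comp (((hpred β).comp measurable_fst).prodMk measurable_snd)) hC
    (fun _ _ ↦ hr_bdd _ _) hδ
  simp only [← hRn, ← hRpop] at hgood
  have hexcess : ∀ w ∈ ⋂ β, {w | |Rn w β - Rpop β| < ε}, ∀ θ : B → ℝ, (∀ β, 0 ≤ θ β) →
      ∑ β, θ β = 1 → (∀ β, z β = 0 → θ β = 0) →
      (∑ β, θhat w β * Rpop β) - (∑ β, θ β * Rpop β) ≤
        C ^ 2 * (L + δ) / (2 * n * lam) + 2 * lam * klFin θ z := fun w hw θ hθ0 hθ1 hθz ↦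
    hε2 ▸ excess_risk_le_of_forall_abs_sub_le hz_nonneg hz_sum (hθhat_nonneg w)
      (hθhat_sum w) (hθhat_ac w) hθ0 hθ1 hθz (fun β ↦ (Set.mem_iInter.mp hw β).le) hlam
      (hmin w θ hθ0 hθ1 hθz)
  refine ⟨hgood.trans (measure_mono hexcess), fun b hb hlam_eq ↦ hgood.trans (measure_mono ?_)⟩
  intro w hw
  rw [Set.mem_ofPred, ← tuned_bound_eq_two_mul_sqrt hLδ hnR hb hlam_eq]
  exact sub_iInf_le_of_forall_sub_le_add_klFin hz_nonneg hz_sum hlam.le hb.le (hexcess w hw)
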